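/- Let n ≥ 1, k ≥ 1 and d ≥ 4k + 3n − 1 be integers. Let [a_1:b_1], …, [a_k:b_k] be pairwise distinct points of P¹ (with (a_j,b_j) ∈ ℂ² \ {0}), and for each j let z_{j,1} ≠ z_{j,2} be complex numbers, giving two distinct points p_{j,1} = (a_j, b_j, z_{j,1}) and p_{j,2} = (a_j, b_j, z_{j,2}) on the fiber of the ruling of 𝔽_n over [a_j:b_j]. Then the subspace {f ∈ V_{d,n} : f is singular at all 2k points p_{j,i}} equals the set of products (b_1x−a_1y)⋯(b_kx−a_ky)·g with g ∈ V_{d−k,n} vanishing at all 2k points, and it has dimension 4(d−k) + 4 − 6n − 2k = (4d+4−6n) − 6k; i.e., it has codimension exactly 6k = 3·(2k) in V_{d,n}. -/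
import Mathlib


open MvPolynomial

noncomputable section

/-- The weights on the variables `x, y, z`: `deg x = deg y = 1`, `deg z = n`. -/
def wt (n : ℕ) : Fin 3 → ℕ := ![1, 1, n]

/-- The subspace of `ℂ[x,y,z]` of polynomials whose degree in `z` is at most `h`. -/
def degZle (h : ℕ) : Submodule ℂ (MvPolynomial (Fin 3) ℂ) where
  carrier := {f | f.degreeOf 2 ≤ h}
  zero_mem' := by simp [Set.mem_setOf_eq, degreeOf_zero]
  add_mem' := by
    intro f g hf hg
    exact le_trans (degreeOf_add_le _ _ _) (max_le hf hg)
  smul_mem' := by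
    intro c f hf
    rw [Set.mem_setOf_eq, smul_eq_C_mul]
    exact le_trans (degreeOf_C_mul_le _ _ _) hf

/-- `V^{(h)}_{d,n}`: the space of polynomials in `ℂ[x,y,z]` that are weighted homogeneous of
degree `d` for the weights `deg x = deg y = 1`, `deg z = n`, and have degree at most `h` in `z`.
This is the space of global sections of `O(hEₙ + dFₙ)` on the Hirzebruch surface `𝔽ₙ`. -/
def Vh (h d n : ℕ) : Submodule ℂ (MvPolynomial (Fin 3) ℂ) :=
  weightedHomogeneousSubmodule ℂ (wt n) d ⊓ degZle h

/-- `V_{d,n}`, the space of global sections of `O(3Eₙ + dFₙ)` on `𝔽ₙ`. -/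
def V (d n : ℕ) : Submodule ℂ (MvPolynomial (Fin 3) ℂ) := Vh 3 d n

/-- `f` is singular at the point `p`: all partial derivatives of `f` vanish at `p`. -/
def SingularAt {σ : Type*} (f : MvPolynomial σ ℂ) (p : σ → ℂ) : Prop :=
  ∀ i, eval p (pderiv i f) = 0

/-- The subspace of polynomials singular at every point of the family `p`. -/
def singSub {ι σ : Type*} (p : ι → σ → ℂ) : Submodule ℂ (MvPolynomial σ ℂ) where
  carrier := {f | ∀ j, SingularAt f (p j)}
  zero_mem' := by intro j i; simp
  add_mem' := by
    intro f g hf hg j i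
    simp [map_add, hf j i, hg j i]
  smul_mem' := by
    intro c f hf j i
    simp [smul_eq_C_mul, pderiv_C_mul, hf j i]

lemma weight_wt (n : ℕ) (m : Fin 3 →₀ ℕ) :
    (Finsupp.weight (wt n)) m = m 0 + m 1 + n * m 2 := by
  have : (Finsupp.weight (wt n)) m = ∑ i : Fin 3, m i • wt n i :=
    Finsupp.sum_fintype _ _ (fun i => zero_smul _ _)
  rw [this, Fin.sum_univ_three]
  simp [wt, smul_eq_mul]
  ring
def mexp (i j l : ℕ) : Fin 3 →₀ ℕ := Finsupp.equivFunOnFinite.symm ![i, j, l]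
@[simp] lemma mexp_apply0 (i j l : ℕ) : mexp i j l 0 = i := rfl
@[simp] lemma mexp_apply1 (i j l : ℕ) : mexp i j l 1 = j := rfl
@[simp] lemma mexp_apply2 (i j l : ℕ) : mexp i j l 2 = l := rfl

lemma mem_Vh_iff {h d n : ℕ} {f : MvPolynomial (Fin 3) ℂ} :
    f ∈ Vh h d n ↔ f.IsWeightedHomogeneous (wt n) d ∧ f.degreeOf 2 ≤ h :=
  Iff.rfl

/-- the index type for the monomial basis -/
abbrev S (d n : ℕ) := Σ l : Fin 4, Fin (d + 1 - n * ↑l)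

def ms (d n : ℕ) : S d n → (Fin 3 →₀ ℕ) :=
  fun s => mexp s.2 (d - n * s.1 - s.2) s.1

lemma ms_inj (d n : ℕ) : Function.Injective (ms d n) := by
  rintro ⟨l, i⟩ ⟨l', i'⟩ h
  have h2 : (l : ℕ) = l' := by
    have := DFunLike.congr_fun h 2
    simpa [ms] using this
  have hl : l = l' := Fin.ext h2
  subst hl
  have h0 : (i : ℕ) = i' := by
    have := DFunLike.congr_fun h 0
    simpa [ms] using this
  simp [Fin.ext h0]

lemma monomial_ms_mem (d n : ℕ) (s : S d n) : (monomial (ms d n s) (1 : ℂ)) ∈ Vh 3 d n := by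
  obtain ⟨l, i⟩ := s
  have hi := i.isLt
  constructor
  · apply isWeightedHomogeneous_monomial
    rw [weight_wt]
    simp only [ms, mexp_apply0, mexp_apply1, mexp_apply2]
    omega
  · show degreeOf 2 _ ≤ 3
    rw [degreeOf_monomial_eq _ _ (one_ne_zero)]
    have := l.isLt
    simp only [ms, mexp_apply2]
    omega

lemma Vh_eq_span (d n : ℕ) :
    Vh 3 d n = Submodule.span ℂ (Set.range fun s : S d n => monomial (ms d n s) (1 : ℂ)) := by
  apply le_antisymm
  · intro f hf
    rw [f.as_sum]
    apply Submodule.sum_mem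
    intro m hm
    have hwh : (Finsupp.weight (wt n)) m = d := hf.1 (mem_support_iff.mp hm)
    rw [weight_wt] at hwh
    have hz : m 2 ≤ 3 := by
      have h2 : degreeOf 2 f ≤ 3 := hf.2
      rw [degreeOf_le_iff] at h2
      exact h2 m hm
    set s0 : S d n := ⟨⟨m 2, by omega⟩, ⟨m 0, by show m 0 < d + 1 - n * m 2; omega⟩⟩ with hs0
    have hms : ms d n s0 = m := by
      ext j
      fin_cases j <;> simp [ms, s0] <;> omega
    rw [show monomial m (coeff m f) = coeff m f • monomial m (1:ℂ) by
      rw [smul_monomial, smul_eq_mul, mul_one]]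
    apply Submodule.smul_mem
    apply Submodule.subset_span
    exact ⟨s0, by simp only []; rw [hms]⟩
  · rw [Submodule.span_le]
    rintro _ ⟨s, rfl⟩
    exact monomial_ms_mem d n s

instance Vh_fd (d n : ℕ) : FiniteDimensional ℂ (Vh 3 d n) := by
  rw [Vh_eq_span]
  exact FiniteDimensional.span_of_finite ℂ (Set.finite_range _)

lemma finrank_Vh (d n : ℕ) (h : 3 * n ≤ d) :
    Module.finrank ℂ (Vh 3 d n) = 4 * d + 4 - 6 * n := by
  rw [Vh_eq_span]
  rw [finrank_span_eq_card]
  · have : Fintype.card (S d n) = ∑ l : Fin 4, (d + 1 - n * l) := by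
      simp [S, Fintype.card_sigma]
    rw [this, Fin.sum_univ_four]
    simp only [Fin.val_zero, Fin.val_one, Fin.val_two]
    have h3 : ((3 : Fin 4) : ℕ) = 3 := rfl
    rw [h3]
    omega
  · have := (basisMonomials (Fin 3) ℂ).linearIndependent
    have hcomp : (fun s : S d n => monomial (ms d n s) (1 : ℂ))
        = (basisMonomials (Fin 3) ℂ) ∘ (ms d n) := by
      funext s; simp [coe_basisMonomials]
    rw [hcomp]
    exact this.comp _ (ms_inj d n)
lemma evalM (p : Fin 3 → ℂ) (m : Fin 3 →₀ ℕ) (c : ℂ) :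
    eval p (monomial m c) = c * p 0 ^ m 0 * p 1 ^ m 1 * p 2 ^ m 2 := by
  rw [eval_monomial, Finsupp.prod_fintype _ _ (fun i => pow_zero _), Fin.prod_univ_three]
  ring

lemma polyEval_aeval (v : Fin 3 → Polynomial ℂ) (t : ℂ) (f : MvPolynomial (Fin 3) ℂ) :
    (aeval v f).eval t = eval (fun i => (v i).eval t) f := by
  induction f using MvPolynomial.induction_on with
  | C a => simp
  | add p q hp hq => simp [hp, hq]
  | mul_X p i hp => simp [hp]

lemma pow_deriv_aux (x : ℂ) (e : ℕ) : x * ((e : ℂ) * x ^ (e - 1)) = (e : ℂ) * x ^ e := by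
  cases e with
  | zero => simp
  | succ e =>
    have : x ^ (e + 1) = x * x ^ e := by rw [pow_succ]; ring
    simp only [Nat.add_sub_cancel, this]
    ring

lemma euler_eval (n d : ℕ) (f : MvPolynomial (Fin 3) ℂ) (hf : f.IsWeightedHomogeneous (wt n) d)
    (p : Fin 3 → ℂ) :
    (d : ℂ) * eval p f = p 0 * eval p (pderiv 0 f) + p 1 * eval p (pderiv 1 f)
      + (n : ℂ) * p 2 * eval p (pderiv 2 f) := by
  have hpd : ∀ i : Fin 3, eval p (pderiv i f)
      = ∑ m ∈ f.support, eval p (pderiv i (monomial m (coeff m f))) := by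
    intro i
    conv_lhs => rw [f.as_sum]
    rw [map_sum, map_sum]
  rw [hpd 0, hpd 1, hpd 2]
  conv_lhs => rw [f.as_sum]
  rw [map_sum, Finset.mul_sum, Finset.mul_sum, Finset.mul_sum, Finset.mul_sum,
    ← Finset.sum_add_distrib, ← Finset.sum_add_distrib]
  apply Finset.sum_congr rfl
  intro m hm
  have hwn : m 0 + m 1 + n * m 2 = d := by
    rw [← weight_wt n m]; exact hf (mem_support_iff.mp hm)
  have hw : (m 0 : ℂ) + m 1 + n * m 2 = d := by exact_mod_cast congrArg (Nat.cast (R := ℂ)) hwn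
  rw [pderiv_monomial, pderiv_monomial, pderiv_monomial, evalM, evalM, evalM, evalM]
  simp only [Finsupp.tsub_apply, Finsupp.single_apply, if_pos, if_neg, reduceIte,
    Nat.sub_zero, show ((0:Fin 3) = 1) = False by simp, show ((0:Fin 3) = 2) = False by simp,
    show ((1:Fin 3) = 0) = False by simp, show ((1:Fin 3) = 2) = False by simp,
    show ((2:Fin 3) = 0) = False by simp, show ((2:Fin 3) = 1) = False by simp,
    if_true, if_false]
  push_cast
  have h0 := pow_deriv_aux (p 0) (m 0)
  have h1 := pow_deriv_aux (p 1) (m 1)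
  have h2 := pow_deriv_aux (p 2) (m 2)
  linear_combination (-(coeff m f * p 1 ^ m 1 * p 2 ^ m 2)) * h0
    + (-(coeff m f * p 0 ^ m 0 * p 2 ^ m 2)) * h1
    + (-((n : ℂ) * coeff m f * p 0 ^ m 0 * p 1 ^ m 1)) * h2
    + (-(coeff m f * p 0 ^ m 0 * p 1 ^ m 1 * p 2 ^ m 2)) * hw
lemma eval_scale (n d : ℕ) (f : MvPolynomial (Fin 3) ℂ)
    (hf : f.IsWeightedHomogeneous (wt n) d) (t A B Z : ℂ) :
    eval ![t * A, t * B, t ^ n * Z] f = t ^ d * eval ![A, B, Z] f := by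
  conv_lhs => rw [f.as_sum]
  conv_rhs => rw [f.as_sum]
  rw [map_sum, map_sum, Finset.mul_sum]
  apply Finset.sum_congr rfl
  intro m hm
  have hw : m 0 + m 1 + n * m 2 = d := by
    rw [← weight_wt n m]; exact hf (mem_support_iff.mp hm)
  rw [evalM, evalM]
  simp only [Matrix.cons_val_zero, Matrix.cons_val_one, Matrix.head_cons,
    Matrix.cons_val_two, Matrix.tail_cons]
  rw [mul_pow, mul_pow, mul_pow, ← pow_mul, ← hw, pow_add, pow_add]
  ring

lemma eval_origin (n d : ℕ) (f : MvPolynomial (Fin 3) ℂ)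
    (hWH : f.IsWeightedHomogeneous (wt n) d) (hdeg : f.degreeOf 2 ≤ 3)
    (h3 : 3 * n < d) (Z : ℂ) :
    eval ![0, 0, Z] f = 0 := by
  conv_lhs => rw [f.as_sum, map_sum]
  apply Finset.sum_eq_zero
  intro m hm
  rw [evalM]
  simp only [Matrix.cons_val_zero, Matrix.cons_val_one, Matrix.head_cons,
    Matrix.cons_val_two, Matrix.tail_cons]
  have hw : m 0 + m 1 + n * m 2 = d := by
    rw [← weight_wt n m]; exact hWH (mem_support_iff.mp hm)
  have hz : m 2 ≤ 3 := degreeOf_le_iff.mp hdeg m hm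
  have hmul : n * m 2 ≤ n * 3 := Nat.mul_le_mul_left n hz
  have : m 0 ≠ 0 ∨ m 1 ≠ 0 := by omega
  rcases this with h | h
  · rw [zero_pow h]; ring
  · rw [zero_pow h]; ring

def resQ (A B : ℂ) (f : MvPolynomial (Fin 3) ℂ) : Polynomial ℂ :=
  aeval ![Polynomial.C A, Polynomial.C B, Polynomial.X] f

lemma resQ_eval (A B t : ℂ) (f : MvPolynomial (Fin 3) ℂ) :
    (resQ A B f).eval t = eval ![A, B, t] f := by
  rw [resQ, polyEval_aeval]
  have hv : (fun i => Polynomial.eval t (![Polynomial.C A, Polynomial.C B, Polynomial.X] i))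
      = ![A, B, t] := by
    funext i; fin_cases i <;> simp
  rw [hv]

lemma resQ_deriv (A B : ℂ) (f : MvPolynomial (Fin 3) ℂ) :
    (resQ A B f).derivative = resQ A B (pderiv 2 f) := by
  unfold resQ
  induction f using MvPolynomial.induction_on with
  | C a => simp
  | add p q hp hq => simp [hp, hq]
  | mul_X p i hp =>
    rw [map_mul, Polynomial.derivative_mul, pderiv_mul, map_add, map_mul, map_mul, hp]
    fin_cases i <;> simp [pderiv_X] <;> ring

lemma resQ_natDegree (A B : ℂ) (f : MvPolynomial (Fin 3) ℂ) (h : f.degreeOf 2 ≤ 3) :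
    (resQ A B f).natDegree ≤ 3 := by
  unfold resQ
  rw [f.as_sum, map_sum]
  apply Polynomial.natDegree_sum_le_of_forall_le
  intro m hm
  have hz : m 2 ≤ 3 := degreeOf_le_iff.mp h m hm
  rw [aeval_monomial, Finsupp.prod_fintype _ _ (fun i => pow_zero _), Fin.prod_univ_three]
  simp only [Matrix.cons_val_zero, Matrix.cons_val_one, Matrix.head_cons,
    Matrix.cons_val_two, Matrix.tail_cons]
  apply le_trans (Polynomial.natDegree_mul_le)
  have e1 : (algebraMap ℂ (Polynomial ℂ) (coeff m f)).natDegree = 0 := by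
    rw [Polynomial.algebraMap_eq]; exact Polynomial.natDegree_C _
  rw [e1]
  apply le_trans (by exact Nat.le_add_left _ 0)
  simp only [Nat.zero_add]
  apply le_trans (Polynomial.natDegree_mul_le)
  apply le_trans (add_le_add (Polynomial.natDegree_mul_le) (le_refl _))
  have c1 : (Polynomial.C A ^ m 0).natDegree = 0 := by
    simp [Polynomial.natDegree_pow]
  have c2 : (Polynomial.C B ^ m 1).natDegree = 0 := by
    simp [Polynomial.natDegree_pow]
  have c3 : ((Polynomial.X : Polynomial ℂ) ^ m 2).natDegree = m 2 := by
    simp [Polynomial.natDegree_X_pow]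
  omega

lemma double_root_dvd (q : Polynomial ℂ) (z : ℂ) (h0 : q.eval z = 0)
    (h1 : q.derivative.eval z = 0) :
    (Polynomial.X - Polynomial.C z) ^ 2 ∣ q := by
  obtain ⟨q1, e1⟩ := Polynomial.dvd_iff_isRoot.mpr h0
  have hd : q.derivative = q1 + (Polynomial.X - Polynomial.C z) * q1.derivative := by
    rw [e1, Polynomial.derivative_mul]
    simp
  have hq1z : q1.eval z = 0 := by
    have h2 := congrArg (Polynomial.eval z) hd
    rw [h1] at h2
    simpa using h2.symm
  obtain ⟨q2, e2⟩ := Polynomial.dvd_iff_isRoot.mpr hq1z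
  exact ⟨q2, by rw [e1, e2]; ring⟩

lemma fiber_vanish (n d : ℕ) (hd0 : d ≠ 0) (f : MvPolynomial (Fin 3) ℂ)
    (hWH : f.IsWeightedHomogeneous (wt n) d) (hdeg : f.degreeOf 2 ≤ 3)
    (A B z1 z2 : ℂ) (hz : z1 ≠ z2)
    (h1 : ∀ i, eval ![A, B, z1] (pderiv i f) = 0)
    (h2 : ∀ i, eval ![A, B, z2] (pderiv i f) = 0) :
    ∀ t, eval ![A, B, t] f = 0 := by
  have heval : ∀ t : ℂ, (resQ A B f).eval t = eval ![A, B, t] f := fun t => resQ_eval A B t f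
  have hq0 : ∀ z', (∀ i, eval ![A, B, z'] (pderiv i f) = 0) → (resQ A B f).eval z' = 0 := by
    intro z' hs
    have he := euler_eval n d f hWH ![A, B, z']
    rw [hs 0, hs 1, hs 2] at he
    simp only [mul_zero, add_zero] at he
    have hd' : (d : ℂ) ≠ 0 := Nat.cast_ne_zero.mpr hd0
    rw [heval]
    exact (mul_eq_zero.mp he).resolve_left hd'
  have hq0' : ∀ z', (∀ i, eval ![A, B, z'] (pderiv i f) = 0) →
      (resQ A B f).derivative.eval z' = 0 := by
    intro z' hs
    rw [resQ_deriv, resQ_eval]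
    exact hs 2
  have d1 := double_root_dvd _ z1 (hq0 z1 h1) (hq0' z1 h1)
  have d2 := double_root_dvd _ z2 (hq0 z2 h2) (hq0' z2 h2)
  have hcop : IsCoprime ((Polynomial.X - Polynomial.C z1) ^ 2)
      ((Polynomial.X - Polynomial.C z2) ^ 2) := by
    apply IsCoprime.pow
    exact Polynomial.isCoprime_X_sub_C_of_isUnit_sub (sub_ne_zero_of_ne hz).isUnit
  have hdvd := hcop.mul_dvd d1 d2
  have hq : resQ A B f = 0 := by
    by_contra h0
    have hle := Polynomial.natDegree_le_of_dvd hdvd h0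
    have h4 : (((Polynomial.X - Polynomial.C z1) ^ 2) *
        ((Polynomial.X - Polynomial.C z2) ^ 2)).natDegree = 4 := by
      rw [Polynomial.natDegree_mul (pow_ne_zero _ (Polynomial.X_sub_C_ne_zero z1))
        (pow_ne_zero _ (Polynomial.X_sub_C_ne_zero z2)),
        Polynomial.natDegree_pow, Polynomial.natDegree_pow]
      simp [Polynomial.natDegree_X_sub_C]
    have hnd := resQ_natDegree A B f hdeg
    omega
  intro t
  rw [← heval, hq, Polynomial.eval_zero]

lemma aux_dvd (c : ℂ) (f : MvPolynomial (Fin 3) ℂ)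
    (hv : ∀ p : Fin 3 → ℂ, p 0 = c * p 1 → eval p f = 0) :
    (X 0 - C c * X 1) ∣ f := by
  have hroot : Polynomial.eval (C c * X 0 : MvPolynomial (Fin 2) ℂ) (finSuccEquiv ℂ 2 f)
      = 0 := by
    apply MvPolynomial.funext
    intro x
    rw [eval_polynomial_eval_finSuccEquiv]
    rw [map_zero]
    refine hv _ ?_
    simp only [show (1 : Fin 3) = Fin.succ 0 from rfl, Fin.cases_succ, Fin.cases_zero]
    simp
  obtain ⟨Q, hQ⟩ := Polynomial.dvd_iff_isRoot.mpr hroot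
  refine ⟨(finSuccEquiv ℂ 2).symm Q, ?_⟩
  have hC : (finSuccEquiv ℂ 2) (C c : MvPolynomial (Fin 3) ℂ) = Polynomial.C (C c) := by
    rw [← MvPolynomial.algebraMap_eq, AlgEquiv.commutes, Polynomial.algebraMap_apply,
      MvPolynomial.algebraMap_eq]
  have hL : (finSuccEquiv ℂ 2) (X 0 - C c * X 1)
      = Polynomial.X - Polynomial.C (C c * X 0) := by
    have h1 : (X 1 : MvPolynomial (Fin 3) ℂ) = X (Fin.succ 0) := rfl
    rw [map_sub, h1, map_mul, finSuccEquiv_X_zero, finSuccEquiv_X_succ, hC,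
      ← Polynomial.C_mul]
  apply (finSuccEquiv ℂ 2).injective
  rw [map_mul, AlgEquiv.apply_symm_apply, hL, hQ]

lemma dvd_linear (A B : ℂ) (hab : ¬(A = 0 ∧ B = 0)) (f : MvPolynomial (Fin 3) ℂ)
    (hv : ∀ t zz : ℂ, eval ![t * A, t * B, zz] f = 0) :
    (C B * X 0 - C A * X 1) ∣ f := by
  by_cases hB : B = 0
  · -- then A ≠ 0, and C B * X 0 - C A * X 1 = - (C A * X 1)
    have hA : A ≠ 0 := fun h => hab ⟨h, hB⟩
    subst hB
    -- X 1 ∣ f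
    have hx1 : (X 1 : MvPolynomial (Fin 3) ℂ) ∣ f := by
      -- via swap rename
      have hsw : ∀ p : Fin 3 → ℂ, p 0 = 0 * p 1 →
          eval p (rename (Equiv.swap (0 : Fin 3) 1) f) = 0 := by
        intro p hp
        rw [eval_rename]
        have : (p ∘ (Equiv.swap (0 : Fin 3) 1)) = ![p 1, p 0, p 2] := by
          funext i; fin_cases i <;> simp [Equiv.swap_apply_def]
        rw [this]
        have h0 : p 0 = 0 := by simpa using hp
        have := hv (p 1 / A) (p 2)
        rw [div_mul_cancel₀ _ hA] at this
        simpa [h0] using this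
      have := aux_dvd 0 _ hsw
      rw [map_zero, zero_mul, sub_zero] at this
      obtain ⟨q, hq⟩ := this
      refine ⟨rename (Equiv.swap (0 : Fin 3) 1) q, ?_⟩
      have h2 := congrArg (rename (⇑(Equiv.swap (0 : Fin 3) 1))) hq
      rw [rename_rename] at h2
      have hss : (⇑(Equiv.swap (0 : Fin 3) 1) ∘ ⇑(Equiv.swap (0 : Fin 3) 1))
          = (id : Fin 3 → Fin 3) := by
        funext x; simp
      rw [hss, rename_id, map_mul, rename_X, Equiv.swap_apply_left] at h2
      exact h2
    obtain ⟨q, hq⟩ := hx1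
    refine ⟨-(C A⁻¹) * q, ?_⟩
    rw [hq]
    have hh : (C (0:ℂ) * X 0 - C A * X 1) * (-(C A⁻¹) * q)
        = C (A * A⁻¹) * (X 1 * q) := by
      rw [C_mul, map_zero]; ring
    rw [hh, mul_inv_cancel₀ hA, C_1, one_mul]
  · -- B ≠ 0
    have hvv : ∀ p : Fin 3 → ℂ, p 0 = A / B * p 1 → eval p f = 0 := by
      intro p hp
      have hvec : p = ![(p 1 / B) * A, (p 1 / B) * B, p 2] := by
        funext i
        fin_cases i
        · simp [hp]; field_simp
        · simp [div_mul_cancel₀ _ hB]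
        · simp
      rw [hvec]
      exact hv _ _
    obtain ⟨q, hq⟩ := aux_dvd (A / B) f hvv
    refine ⟨C B⁻¹ * q, ?_⟩
    rw [hq]
    have : (C B * X 0 - C A * X 1) * (C B⁻¹ * q)
        = (C (B * B⁻¹) * X 0 - C (A * B⁻¹) * X 1) * q := by
      rw [C_mul, C_mul]; ring
    rw [this, mul_inv_cancel₀ hB, C_1, one_mul]
    have hABB : A * B⁻¹ = A / B := by ring
    rw [hABB]

lemma van_extend (A B : ℂ) (g : MvPolynomial (Fin 3) ℂ)
    (h : ∀ t : ℂ, t ≠ 0 → ∀ zz, eval ![t * A, t * B, zz] g = 0) :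
    ∀ t zz, eval ![t * A, t * B, zz] g = 0 := by
  intro t zz
  set q : Polynomial ℂ := aeval ![Polynomial.C A * Polynomial.X, Polynomial.C B * Polynomial.X,
    Polynomial.C zz] g with hq
  have hqe : ∀ s : ℂ, q.eval s = eval ![s * A, s * B, zz] g := by
    intro s
    rw [hq, polyEval_aeval]
    have hv : (fun i => Polynomial.eval s (![Polynomial.C A * Polynomial.X,
        Polynomial.C B * Polynomial.X, Polynomial.C zz] i)) = ![s * A, s * B, zz] := by
      funext i
      fin_cases i
      · show Polynomial.eval s (Polynomial.C A * Polynomial.X) = s * A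
        rw [Polynomial.eval_mul, Polynomial.eval_C, Polynomial.eval_X]; ring
      · show Polynomial.eval s (Polynomial.C B * Polynomial.X) = s * B
        rw [Polynomial.eval_mul, Polynomial.eval_C, Polynomial.eval_X]; ring
      · show Polynomial.eval s (Polynomial.C zz) = zz
        simp
    rw [hv]
  have hq0 : q = 0 := by
    apply Polynomial.eq_zero_of_infinite_isRoot
    apply Set.Infinite.mono (s := {0}ᶜ)
    · intro x hx
      rw [Set.mem_setOf_eq, Polynomial.IsRoot, hqe]
      exact h x hx _
    · exact Set.Finite.infinite_compl (Set.finite_singleton 0)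
  rw [← hqe, hq0, Polynomial.eval_zero]

lemma prod_dvd : ∀ (k : ℕ) (a b : Fin k → ℂ), (∀ j, ¬(a j = 0 ∧ b j = 0)) →
    (∀ j j', j ≠ j' → a j * b j' ≠ a j' * b j) →
    ∀ f : MvPolynomial (Fin 3) ℂ, (∀ j (t zz : ℂ), eval ![t * a j, t * b j, zz] f = 0) →
    (∏ j, (C (b j) * X 0 - C (a j) * X 1)) ∣ f := by
  intro k
  induction k with
  | zero => intro a b _ _ f _; simp
  | succ k IH =>
    intro a b hab hdist f hvan
    have h0 := dvd_linear (a 0) (b 0) (hab 0) f (hvan 0)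
    obtain ⟨g, hg⟩ := h0
    have hvg : ∀ j : Fin k, ∀ (t zz : ℂ),
        eval ![t * a j.succ, t * b j.succ, zz] g = 0 := by
      intro j
      apply van_extend
      intro t ht zz
      have hL : eval ![t * a j.succ, t * b j.succ, zz] (C (b 0) * X 0 - C (a 0) * X 1)
          = t * (b 0 * a j.succ - a 0 * b j.succ) := by
        simp
        ring
      have hne : b 0 * a j.succ - a 0 * b j.succ ≠ 0 := by
        intro hE
        apply hdist 0 j.succ (by simp [Fin.succ_ne_zero, (Fin.succ_ne_zero j).symm])
        linear_combination -hE
      have := hvan j.succ t zz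
      rw [hg, map_mul, hL] at this
      rcases mul_eq_zero.mp this with h | h
      · exact absurd h (by exact mul_ne_zero ht hne)
      · exact h
    have hdvd2 := IH (fun j => a j.succ) (fun j => b j.succ)
      (fun j => hab j.succ)
      (fun j j' hne => hdist j.succ j'.succ (by simpa [Fin.succ_inj] using hne))
      g hvg
    obtain ⟨g2, hg2⟩ := hdvd2
    refine ⟨g2, ?_⟩
    rw [Fin.prod_univ_succ, hg, hg2]
    ring
def Lf (A B : ℂ) : MvPolynomial (Fin 3) ℂ := C B * X 0 - C A * X 1

lemma Lf_eval (A B x y zz : ℂ) : eval ![x, y, zz] (Lf A B) = B * x - A * y := by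
  simp [Lf]

lemma Lf_ne (A B : ℂ) (hab : ¬(A = 0 ∧ B = 0)) : Lf A B ≠ 0 := by
  intro h
  by_cases hB : B = 0
  · have hA : A ≠ 0 := fun hA => hab ⟨hA, hB⟩
    have := congrArg (eval ![0, -1, 0]) h
    rw [Lf_eval, map_zero] at this
    apply hA
    simpa using this
  · have := congrArg (eval ![1, 0, 0]) h
    rw [Lf_eval, map_zero] at this
    apply hB
    simpa using this

lemma Lf_wh (n : ℕ) (A B : ℂ) : (Lf A B).IsWeightedHomogeneous (wt n) 1 := by
  have h1 : (C B * X 0 : MvPolynomial (Fin 3) ℂ).IsWeightedHomogeneous (wt n) 1 := by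
    have := (isWeightedHomogeneous_C (wt n) B).mul (isWeightedHomogeneous_X ℂ (wt n) 0)
    simpa [wt] using this
  have h2 : (C A * X 1 : MvPolynomial (Fin 3) ℂ).IsWeightedHomogeneous (wt n) 1 := by
    have := (isWeightedHomogeneous_C (wt n) A).mul (isWeightedHomogeneous_X ℂ (wt n) 1)
    simpa [wt] using this
  have : (Lf A B) ∈ weightedHomogeneousSubmodule ℂ (wt n) 1 :=
    Submodule.sub_mem _ h1 h2
  exact this

lemma prodL_wh (n k : ℕ) (a b : Fin k → ℂ) (s : Finset (Fin k)) :
    (∏ j ∈ s, Lf (a j) (b j)).IsWeightedHomogeneous (wt n) s.card := by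
  have := IsWeightedHomogeneous.prod s (fun j => Lf (a j) (b j)) (fun _ => 1)
    (fun j _ => Lf_wh n (a j) (b j))
  simpa using this

lemma degZ_neg (p : MvPolynomial (Fin 3) ℂ) : (-p).degreeOf 2 = p.degreeOf 2 := by
  rw [degreeOf_eq_sup, degreeOf_eq_sup, support_neg]

lemma degZ_L (A B : ℂ) : (Lf A B).degreeOf 2 ≤ 0 := by
  rw [Lf, sub_eq_add_neg]
  apply le_trans (degreeOf_add_le _ _ _)
  apply max_le
  · apply le_trans (degreeOf_mul_le _ _ _)
    rw [degreeOf_C, degreeOf_X]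
    simp
  · rw [degZ_neg]
    apply le_trans (degreeOf_mul_le _ _ _)
    rw [degreeOf_C, degreeOf_X]
    simp


lemma degZ_prodL (k : ℕ) (a b : Fin k → ℂ) (s : Finset (Fin k)) :
    (∏ j ∈ s, Lf (a j) (b j)).degreeOf 2 ≤ 0 := by
  refine Finset.prod_induction (fun j => Lf (a j) (b j)) (fun q => q.degreeOf 2 ≤ 0)
    ?_ ?_ ?_
  · intro x y hx hy
    apply le_trans (degreeOf_mul_le _ _ _)
    omega
  · have : ((1 : MvPolynomial (Fin 3) ℂ)).degreeOf 2 = 0 := by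
      rw [show (1 : MvPolynomial (Fin 3) ℂ) = C 1 from rfl, degreeOf_C]
    omega
  · intro j _
    exact degZ_L (a j) (b j)

lemma comp_factor (n kk e : ℕ) (P g1 f : MvPolynomial (Fin 3) ℂ)
    (hP : P.IsWeightedHomogeneous (wt n) kk)
    (hf : f.IsWeightedHomogeneous (wt n) (kk + e))
    (hfe : f = P * g1) :
    f = P * weightedHomogeneousComponent (wt n) e g1 := by
  classical
  set g := weightedHomogeneousComponent (wt n) e g1 with hg
  have hgW : g.IsWeightedHomogeneous (wt n) e :=
    weightedHomogeneousComponent_isWeightedHomogeneous e g1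
  have hPg : (P * g).IsWeightedHomogeneous (wt n) (kk + e) := hP.mul hgW
  ext m
  by_cases hm : (Finsupp.weight (wt n)) m = kk + e
  · rw [hfe, coeff_mul, coeff_mul]
    apply Finset.sum_congr rfl
    rintro ⟨m1, m2⟩ hx
    by_cases hP1 : coeff m1 P = 0
    · simp [hP1]
    · have h1 : (Finsupp.weight (wt n)) m1 = kk := hP hP1
      have hsum : m1 + m2 = m := Finset.HasAntidiagonal.mem_antidiagonal.mp hx
      have h2 : (Finsupp.weight (wt n)) m2 = e := by
        have hadd : (Finsupp.weight (wt n)) (m1 + m2)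
            = (Finsupp.weight (wt n)) m1 + (Finsupp.weight (wt n)) m2 := map_add _ _ _
        rw [hsum, hm, h1] at hadd
        omega
      have hcg : coeff m2 g = coeff m2 g1 := by
        rw [hg, coeff_weightedHomogeneousComponent, if_pos h2]
      rw [hcg]
  · have hz1 : coeff m f = 0 := by
      by_contra hc; exact hm (hf hc)
    have hz2 : coeff m (P * g) = 0 := by
      by_contra hc; exact hm (hPg hc)
    rw [hz1, hz2]

lemma degZ_quotient (P g f : MvPolynomial (Fin 3) ℂ) (hP : P ≠ 0) (hfe : f = P * g)
    (h : f.degreeOf 2 ≤ 3) : g.degreeOf 2 ≤ 3 := by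
  by_cases hg : g = 0
  · simp [hg]
  · set e := (renameEquiv ℂ (Equiv.swap (0 : Fin 3) 2)).trans (finSuccEquiv ℂ 2) with he
    have hdeg : ∀ u : MvPolynomial (Fin 3) ℂ, (e u).natDegree = u.degreeOf 2 := by
      intro u
      rw [he]
      simp only [AlgEquiv.trans_apply, renameEquiv_apply]
      rw [natDegree_finSuccEquiv]
      have hh := degreeOf_rename_of_injective
        (f := ⇑(Equiv.swap (0 : Fin 3) 2)) (Equiv.injective _) (p := u) (i := 2)
      rw [Equiv.swap_apply_right] at hh
      exact hh
    have hne : ∀ u : MvPolynomial (Fin 3) ℂ, u ≠ 0 → e u ≠ 0 := by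
      intro u hu hc
      apply hu
      have := congrArg e.symm hc
      simpa using this
    rw [hfe] at h
    have h2 := hdeg (P * g)
    rw [map_mul, Polynomial.natDegree_mul (hne P hP) (hne g hg)] at h2
    have h3 := hdeg P
    have h4 := hdeg g
    omega

lemma mem_V_mul (n d k : ℕ) (hkd : k ≤ d) (a b : Fin k → ℂ) (g : MvPolynomial (Fin 3) ℂ)
    (hgW : g.IsWeightedHomogeneous (wt n) (d - k)) (hgz : g.degreeOf 2 ≤ 3) :
    ((∏ j, Lf (a j) (b j)) * g).IsWeightedHomogeneous (wt n) d ∧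
      ((∏ j, Lf (a j) (b j)) * g).degreeOf 2 ≤ 3 := by
  constructor
  · have hPw := prodL_wh n k a b Finset.univ
    rw [Finset.card_univ, Fintype.card_fin] at hPw
    have := hPw.mul hgW
    rwa [show k + (d - k) = d by omega] at this
  · apply le_trans (degreeOf_mul_le _ _ _)
    have h1 := degZ_prodL k a b Finset.univ
    omega

lemma Lf_pd0 (A B : ℂ) : pderiv 0 (Lf A B) = C B := by
  simp [Lf]

lemma Lf_pd1 (A B : ℂ) : pderiv 1 (Lf A B) = -C A := by
  simp [Lf]

lemma sing_mul (k : ℕ) (a b : Fin k → ℂ) (g : MvPolynomial (Fin 3) ℂ)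
    (p : Fin 3 → ℂ) (j : Fin k)
    (hL0 : eval p (Lf (a j) (b j)) = 0) (hg0 : eval p g = 0) :
    ∀ ii, eval p (pderiv ii ((∏ j', Lf (a j') (b j')) * g)) = 0 := by
  intro ii
  have hP0 : eval p (∏ j', Lf (a j') (b j')) = 0 := by
    rw [map_prod]
    exact Finset.prod_eq_zero (Finset.mem_univ j) hL0
  rw [pderiv_mul, map_add, map_mul, map_mul, hP0, hg0]
  ring
lemma degZ_one : ((1 : MvPolynomial (Fin 3) ℂ)).degreeOf 2 = 0 := by
  rw [show (1 : MvPolynomial (Fin 3) ℂ) = C 1 from rfl, degreeOf_C]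

lemma degZ_pow (p : MvPolynomial (Fin 3) ℂ) (s : ℕ) (hp : p.degreeOf 2 ≤ 0) :
    (p ^ s).degreeOf 2 ≤ 0 := by
  induction s with
  | zero => rw [pow_zero]; exact le_of_eq degZ_one
  | succ s ih =>
    rw [pow_succ]
    exact le_trans (degreeOf_mul_le _ _ _) (by omega)

lemma X_pow_wh (n : ℕ) (u : Fin 3) (s : ℕ) :
    ((X u : MvPolynomial (Fin 3) ℂ) ^ s).IsWeightedHomogeneous (wt n) (s * wt n u) := by
  induction s with
  | zero => simpa using isWeightedHomogeneous_one ℂ (wt n)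
  | succ s ih =>
    rw [pow_succ, Nat.succ_mul]
    exact ih.mul (isWeightedHomogeneous_X ℂ (wt n) u)

lemma exists_dual (n k D : ℕ) (hn : 1 ≤ n) (hk : 1 ≤ k) (hD : n + k - 1 ≤ D)
    (a b : Fin k → ℂ) (hab : ∀ j, ¬(a j = 0 ∧ b j = 0))
    (hdist : ∀ j j', j ≠ j' → a j * b j' ≠ a j' * b j)
    (z : Fin k → Fin 2 → ℂ) (hz : ∀ j, z j 0 ≠ z j 1) (j : Fin k) (i : Fin 2) :
    ∃ Q : MvPolynomial (Fin 3) ℂ, Q.IsWeightedHomogeneous (wt n) D ∧ Q.degreeOf 2 ≤ 3 ∧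
      (∀ (j' : Fin k) (i' : Fin 2), (j', i') ≠ (j, i) → eval ![a j', b j', z j' i'] Q = 0)
      ∧ eval ![a j, b j, z j i] Q ≠ 0 := by
  classical
  set e := D - (k - 1) with hedef
  have he : (k - 1) + e = D := by omega
  have hen : n ≤ e := by omega
  set u : Fin 3 := if a j = 0 then 1 else 0 with hu
  set l0 : ℂ := if a j = 0 then b j else a j with hl0def
  have hl0 : l0 ≠ 0 := by
    rw [hl0def]; split_ifs with h
    · exact fun hb => hab j ⟨h, hb⟩
    · exact h
  have hwu : wt n u = 1 := by
    rw [hu]; split_ifs <;> rfl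
  have hXu : ∀ zz : ℂ, eval ![a j, b j, zz] (X u : MvPolynomial (Fin 3) ℂ) = l0 := by
    intro zz; rw [hu, hl0def]; split_ifs <;> simp
  have hdegu : degreeOf 2 (X u : MvPolynomial (Fin 3) ℂ) ≤ 0 := by
    rw [hu]; split_ifs <;> (rw [degreeOf_X]; simp)
  set zo := z j (1 - i) with hzo
  have hzne : zo ≠ z j i := by
    rw [hzo]; fin_cases i
    · simpa using (hz j).symm
    · simpa using hz j
  set R : MvPolynomial (Fin 3) ℂ :=
    C (l0 ^ n) * X u ^ (e - n) * X 2 - C zo * X u ^ e with hR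
  set Pj : MvPolynomial (Fin 3) ℂ := ∏ j' ∈ Finset.univ.erase j, Lf (a j') (b j') with hPj
  have hevalR : ∀ zz : ℂ, eval ![a j, b j, zz] R = l0 ^ e * (zz - zo) := by
    intro zz
    have hX2 : eval ![a j, b j, zz] (X 2 : MvPolynomial (Fin 3) ℂ) = zz := by simp
    rw [hR, map_sub, map_mul, map_mul, map_mul, eval_C, eval_C, map_pow, map_pow,
      hXu, hX2]
    rw [← pow_add, show n + (e - n) = e by omega]
    ring
  have hPjprod : ∀ zz : ℂ, eval ![a j, b j, zz] Pj
      = ∏ j' ∈ Finset.univ.erase j, (b j' * a j - a j' * b j) := by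
    intro zz
    rw [hPj, map_prod]
    exact Finset.prod_congr rfl (fun j' _ => Lf_eval _ _ _ _ _)
  have hPjne : ∀ zz : ℂ, eval ![a j, b j, zz] Pj ≠ 0 := by
    intro zz
    rw [hPjprod]
    rw [Finset.prod_ne_zero_iff]
    intro j' hj'
    have hjj : j' ≠ j := (Finset.mem_erase.mp hj').1
    intro hE
    exact hdist j' j hjj (by linear_combination -hE)
  refine ⟨Pj * R, ?_, ?_, ?_, ?_⟩
  · -- weighted homogeneous of degree D
    have hPw : Pj.IsWeightedHomogeneous (wt n) (k - 1) := by
      have := prodL_wh n k a b (Finset.univ.erase j)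
      rwa [Finset.card_erase_of_mem (Finset.mem_univ j), Finset.card_univ,
        Fintype.card_fin] at this
    have hRw : R.IsWeightedHomogeneous (wt n) e := by
      have h1 : (C (l0 ^ n) * X u ^ (e - n) * X 2 : MvPolynomial (Fin 3) ℂ).IsWeightedHomogeneous
          (wt n) e := by
        have := ((isWeightedHomogeneous_C (wt n) (l0 ^ n)).mul
          (X_pow_wh n u (e - n))).mul (isWeightedHomogeneous_X ℂ (wt n) 2)
        rw [hwu] at this
        have hdeg : 0 + (e - n) * 1 + wt n 2 = e := by
          have : wt n 2 = n := rfl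
          omega
        rwa [hdeg] at this
      have h2 : (C zo * X u ^ e : MvPolynomial (Fin 3) ℂ).IsWeightedHomogeneous (wt n) e := by
        have := (isWeightedHomogeneous_C (wt n) zo).mul (X_pow_wh n u e)
        rw [hwu] at this
        rwa [show 0 + e * 1 = e by omega] at this
      exact Submodule.sub_mem (weightedHomogeneousSubmodule ℂ (wt n) e) h1 h2
    have := hPw.mul hRw
    rwa [he] at this
  · -- degree in z at most 3
    apply le_trans (degreeOf_mul_le _ _ _)
    have h1 : Pj.degreeOf 2 ≤ 0 := by rw [hPj]; exact degZ_prodL k a b _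
    have h2 : R.degreeOf 2 ≤ 1 := by
      rw [hR, sub_eq_add_neg]
      apply le_trans (degreeOf_add_le _ _ _)
      apply max_le
      · apply le_trans (degreeOf_mul_le _ _ _)
        have ha := degreeOf_mul_le 2 (C (l0 ^ n)) ((X u : MvPolynomial (Fin 3) ℂ) ^ (e - n))
        have hb := degZ_pow (X u) (e - n) hdegu
        have hc : degreeOf 2 (X 2 : MvPolynomial (Fin 3) ℂ) = 1 := by
          rw [degreeOf_X]; simp
        have hd : degreeOf 2 (C (l0 ^ n) : MvPolynomial (Fin 3) ℂ) = 0 := degreeOf_C _ _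
        omega
      · rw [degZ_neg]
        apply le_trans (degreeOf_mul_le _ _ _)
        have hb := degZ_pow (X u) e hdegu
        have hd : degreeOf 2 (C zo : MvPolynomial (Fin 3) ℂ) = 0 := degreeOf_C _ _
        omega
    omega
  · -- vanishing at the other points
    rintro j' i' hne
    by_cases hjj : j' = j
    · subst hjj
      have hii : i' ≠ i := fun h => hne (by rw [h])
      have hio : i' = 1 - i := by
        fin_cases i <;> fin_cases i' <;> simp_all
      rw [map_mul, hio, ← hzo, hevalR]
      simp
    · rw [map_mul]
      have : eval ![a j', b j', z j' i'] Pj = 0 := by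
        rw [hPj, map_prod]
        apply Finset.prod_eq_zero (Finset.mem_erase.mpr ⟨hjj, Finset.mem_univ j'⟩)
        rw [Lf_eval]
        ring
      rw [this, zero_mul]
  · rw [map_mul, hevalR]
    apply mul_ne_zero (hPjne _)
    apply mul_ne_zero (pow_ne_zero _ hl0)
    exact sub_ne_zero_of_ne (Ne.symm hzne)

/-- Remark (pairs of singular points on fibers): for `n ≥ 1`, `k ≥ 1`, `d ≥ 4k + 3n - 1`,
`k` pairwise distinct points `[aⱼ : bⱼ]` of `ℙ¹`, and two distinct points on the fiber of
the ruling of `𝔽ₙ` over each `[aⱼ : bⱼ]` (off `Eₙ`), the subspace of `V_{d,n}` of polynomials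
singular at all `2k` points equals the set of products `(b₁x - a₁y)⋯(bₖx - aₖy)·g` with
`g ∈ V_{d-k,n}` vanishing at all `2k` points, and it has dimension
`4(d-k) + 4 - 6n - 2k`, i.e. codimension `6k` in `V_{d,n}`. -/
theorem pairs_on_fibers (n k d : ℕ) (hn : 1 ≤ n) (hk : 1 ≤ k) (hd : 4 * k + 3 * n - 1 ≤ d)
    (a b : Fin k → ℂ) (hab : ∀ j, (a j, b j) ≠ (0, 0))
    (hdist : ∀ j j', j ≠ j' → a j * b j' ≠ a j' * b j)
    (z : Fin k → Fin 2 → ℂ) (hz : ∀ j, z j 0 ≠ z j 1) :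
    ((V d n ⊓ singSub (fun ji : Fin k × Fin 2 => ![a ji.1, b ji.1, z ji.1 ji.2])) : Set (MvPolynomial (Fin 3) ℂ))
        = {f | ∃ g ∈ V (d - k) n, (∀ (j : Fin k) (i : Fin 2), eval ![a j, b j, z j i] g = 0) ∧
            f = (∏ j, (C (b j) * X 0 - C (a j) * X 1)) * g} ∧
    Module.finrank ℂ
        ↥(V d n ⊓ singSub (fun ji : Fin k × Fin 2 => ![a ji.1, b ji.1, z ji.1 ji.2]))
      = 4 * (d - k) + 4 - 6 * n - 2 * k := by
  classical
  have habn : ∀ j, ¬(a j = 0 ∧ b j = 0) := fun j h => hab j (by rw [h.1, h.2])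
  set P : MvPolynomial (Fin 3) ℂ := ∏ j, (C (b j) * X 0 - C (a j) * X 1) with hPdef
  have hPL : P = ∏ j, Lf (a j) (b j) := rfl
  have hPne : P ≠ 0 := by
    rw [hPL, Finset.prod_ne_zero_iff]
    exact fun j _ => Lf_ne (a j) (b j) (habn j)
  have hPwh : P.IsWeightedHomogeneous (wt n) k := by
    rw [hPL]
    have h := prodL_wh n k a b Finset.univ
    rwa [Finset.card_univ, Fintype.card_fin] at h
  have hforward : ∀ f, f ∈ V d n ⊓ singSub (fun ji : Fin k × Fin 2 =>
        ![a ji.1, b ji.1, z ji.1 ji.2]) →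
      ∃ g ∈ V (d - k) n, (∀ (j : Fin k) (i : Fin 2), eval ![a j, b j, z j i] g = 0) ∧
        f = P * g := by
    intro f hf
    obtain ⟨hfV, hfS⟩ := Submodule.mem_inf.mp hf
    have hfW : f.IsWeightedHomogeneous (wt n) d := hfV.1
    have hfz : f.degreeOf 2 ≤ 3 := hfV.2
    have hsing : ∀ (j : Fin k) (i : Fin 2) (ii : Fin 3),
        eval ![a j, b j, z j i] (pderiv ii f) = 0 := fun j i ii => hfS (j, i) ii
    have hvanf : ∀ j (t zz : ℂ), eval ![t * a j, t * b j, zz] f = 0 := by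
      intro j
      have hv0 : ∀ t, eval ![a j, b j, t] f = 0 :=
        fiber_vanish n d (by omega) f hfW hfz (a j) (b j) (z j 0) (z j 1) (hz j)
          (hsing j 0) (hsing j 1)
      intro t zz
      by_cases ht : t = 0
      · subst ht
        have h00 : (![(0:ℂ) * a j, 0 * b j, zz] : Fin 3 → ℂ) = ![0, 0, zz] := by
          funext ii; fin_cases ii <;> simp
        rw [h00]
        exact eval_origin n d f hfW hfz (by omega) zz
      · have hzz : t ^ n * (zz / t ^ n) = zz := mul_div_cancel₀ _ (pow_ne_zero n ht)
        have hs := eval_scale n d f hfW t (a j) (b j) (zz / t ^ n)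
        rw [hzz] at hs
        rw [hs, hv0, mul_zero]
    obtain ⟨g1, hg1⟩ := prod_dvd k a b habn hdist f hvanf
    have hg1' : f = P * g1 := by rw [hPdef]; exact hg1
    have hfeq : f = P * weightedHomogeneousComponent (wt n) (d - k) g1 := by
      apply comp_factor n k (d - k) P g1 f hPwh _ hg1'
      rwa [show k + (d - k) = d by omega]
    set g := weightedHomogeneousComponent (wt n) (d - k) g1 with hgdef
    have hgW : g.IsWeightedHomogeneous (wt n) (d - k) :=
      weightedHomogeneousComponent_isWeightedHomogeneous _ _
    have hgz : g.degreeOf 2 ≤ 3 := degZ_quotient P g f hPne hfeq hfz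
    have hgvan : ∀ (j : Fin k) (i : Fin 2), eval ![a j, b j, z j i] g = 0 := by
      intro j i
      have hfact : f = Lf (a j) (b j) *
          ((∏ j' ∈ Finset.univ.erase j, Lf (a j') (b j')) * g) := by
        rw [hfeq, hPL, ← Finset.mul_prod_erase Finset.univ _ (Finset.mem_univ j)]
        ring
      have hL0 : eval ![a j, b j, z j i] (Lf (a j) (b j)) = 0 := by rw [Lf_eval]; ring
      have hpd : ∀ ii : Fin 3, eval ![a j, b j, z j i] (pderiv ii f)
          = eval ![a j, b j, z j i] (pderiv ii (Lf (a j) (b j)))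
            * eval ![a j, b j, z j i] ((∏ j' ∈ Finset.univ.erase j, Lf (a j') (b j')) * g) := by
        intro ii
        rw [hfact]
        simp only [pderiv_mul, map_add, map_mul, hL0]
        ring
      have h0 := hsing j i 0
      have h1 := hsing j i 1
      rw [hpd 0, Lf_pd0, eval_C] at h0
      rw [hpd 1, Lf_pd1, map_neg, eval_C] at h1
      have hGz : eval ![a j, b j, z j i]
          ((∏ j' ∈ Finset.univ.erase j, Lf (a j') (b j')) * g) = 0 := by
        by_cases hbj : b j = 0
        · have haj : a j ≠ 0 := fun h => habn j ⟨h, hbj⟩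
          rcases mul_eq_zero.mp h1 with h' | h'
          · exact absurd (neg_eq_zero.mp h') haj
          · exact h'
        · rcases mul_eq_zero.mp h0 with h' | h'
          · exact absurd h' hbj
          · exact h'
      rw [map_mul] at hGz
      rcases mul_eq_zero.mp hGz with hPj0 | hgz0
      · exfalso
        rw [map_prod] at hPj0
        obtain ⟨j', hj', hj'0⟩ := Finset.prod_eq_zero_iff.mp hPj0
        rw [Lf_eval] at hj'0
        exact hdist j' j (Finset.mem_erase.mp hj').1 (by linear_combination -hj'0)
      · exact hgz0
    exact ⟨g, ⟨hgW, hgz⟩, hgvan, hfeq⟩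
  have hbackward : ∀ g, g ∈ V (d - k) n →
      (∀ (j : Fin k) (i : Fin 2), eval ![a j, b j, z j i] g = 0) →
      P * g ∈ V d n ⊓ singSub (fun ji : Fin k × Fin 2 => ![a ji.1, b ji.1, z ji.1 ji.2]) := by
    intro g hgV hgvan
    apply Submodule.mem_inf.mpr
    constructor
    · have h := mem_V_mul n d k (by omega) a b g hgV.1 hgV.2
      rw [hPdef]
      exact ⟨h.1, h.2⟩
    · intro ji ii
      have h := sing_mul k a b g ![a ji.1, b ji.1, z ji.1 ji.2] ji.1
        (by rw [Lf_eval]; ring) (hgvan ji.1 ji.2) ii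
      rw [hPdef]
      exact h
  have hset : ((V d n ⊓ singSub (fun ji : Fin k × Fin 2 =>
        ![a ji.1, b ji.1, z ji.1 ji.2])) : Set (MvPolynomial (Fin 3) ℂ))
      = {f | ∃ g ∈ V (d - k) n, (∀ (j : Fin k) (i : Fin 2), eval ![a j, b j, z j i] g = 0) ∧
          f = P * g} := by
    ext f
    simp only [SetLike.mem_coe, Set.mem_setOf_eq]
    constructor
    · intro hf
      exact hforward f hf
    · rintro ⟨g, hgV, hgvan, rfl⟩
      exact hbackward g hgV hgvan
  refine ⟨hset, ?_⟩
  haveI : FiniteDimensional ℂ (V (d - k) n) := Vh_fd (d - k) n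
  let E : (V (d - k) n) →ₗ[ℂ] (Fin k × Fin 2 → ℂ) :=
    { toFun := fun g ji => eval ![a ji.1, b ji.1, z ji.1 ji.2] (g : MvPolynomial (Fin 3) ℂ)
      map_add' := fun g h => by funext ji; simp
      map_smul' := fun c g => by
        funext ji
        simp [Submodule.coe_smul, smul_eq_C_mul] }
  have hEapp : ∀ (g : V (d - k) n) (ji : Fin k × Fin 2),
      E g ji = eval ![a ji.1, b ji.1, z ji.1 ji.2] (g : MvPolynomial (Fin 3) ℂ) :=
    fun g ji => rfl
  have hEsurj : Function.Surjective E := by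
    have hbv : ∀ ji : Fin k × Fin 2, ∃ g : V (d - k) n, E g = Pi.single ji (1 : ℂ) := by
      rintro ⟨j, i⟩
      obtain ⟨Q, hQw, hQz, hQ0, hQne⟩ := exists_dual n k (d - k) hn hk (by omega)
        a b habn hdist z hz j i
      refine ⟨⟨(eval ![a j, b j, z j i] Q)⁻¹ • Q,
        Submodule.smul_mem _ _ (⟨hQw, hQz⟩ : Q ∈ V (d - k) n)⟩, ?_⟩
      funext ji'
      have hEval : ∀ (x : MvPolynomial (Fin 3) ℂ) (hx : x ∈ V (d - k) n)
          (ji : Fin k × Fin 2), E ⟨x, hx⟩ ji = eval ![a ji.1, b ji.1, z ji.1 ji.2] x :=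
        fun _ _ _ => rfl
      rw [hEval, smul_eq_C_mul, map_mul, eval_C]
      by_cases hji : ji' = (j, i)
      · subst hji
        rw [Pi.single_eq_same]
        exact inv_mul_cancel₀ hQne
      · rw [Pi.single_eq_of_ne hji, hQ0 ji'.1 ji'.2 (by
          intro hcon
          exact hji (by rw [← hcon])), mul_zero]
    intro v
    choose gs hgs using hbv
    refine ⟨∑ ji : Fin k × Fin 2, v ji • gs ji, ?_⟩
    rw [map_sum]
    have hstep : ∀ ji : Fin k × Fin 2, E (v ji • gs ji) = Pi.single ji (v ji) := by
      intro ji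
      rw [map_smul, hgs, ← Pi.single_smul, smul_eq_mul, mul_one]
    rw [Finset.sum_congr rfl (fun ji _ => hstep ji)]
    exact Finset.univ_sum_single v
  have hrank := LinearMap.finrank_range_add_finrank_ker E
  have hrange : LinearMap.range E = ⊤ := LinearMap.range_eq_top.mpr hEsurj
  have h2k : Module.finrank ℂ (Fin k × Fin 2 → ℂ) = 2 * k := by
    rw [Module.finrank_pi, Fintype.card_prod, Fintype.card_fin, Fintype.card_fin]
    ring
  have hrange' : Module.finrank ℂ (LinearMap.range E) = 2 * k := by
    rw [hrange, finrank_top, h2k]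
  have hW : Module.finrank ℂ (V (d - k) n) = 4 * (d - k) + 4 - 6 * n :=
    finrank_Vh (d - k) n (by omega)
  have hkerE : ∀ gg : V (d - k) n, gg ∈ LinearMap.ker E ↔
      ∀ (j : Fin k) (i : Fin 2), eval ![a j, b j, z j i] (gg : MvPolynomial (Fin 3) ℂ) = 0 := by
    intro gg
    rw [LinearMap.mem_ker]
    constructor
    · intro h j i
      have hc := congrFun h (j, i)
      rwa [hEapp] at hc
    · intro h
      funext ji
      rw [hEapp]
      exact h ji.1 ji.2
  let μ : (LinearMap.ker E) →ₗ[ℂ]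
      ↥(V d n ⊓ singSub (fun ji : Fin k × Fin 2 => ![a ji.1, b ji.1, z ji.1 ji.2])) :=
    { toFun := fun gg => ⟨P * (gg : MvPolynomial (Fin 3) ℂ),
        hbackward _ gg.1.2 ((hkerE gg.1).mp gg.2)⟩
      map_add' := fun g h => by
        apply Subtype.ext
        simp [mul_add]
      map_smul' := fun c g => by
        apply Subtype.ext
        simp [mul_smul_comm] }
  have hμinj : Function.Injective μ := by
    intro g g' h
    have h1 : P * ((g : V (d - k) n) : MvPolynomial (Fin 3) ℂ)
        = P * ((g' : V (d - k) n) : MvPolynomial (Fin 3) ℂ) :=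
      congrArg Subtype.val h
    have h2 := mul_left_cancel₀ hPne h1
    exact Subtype.ext (Subtype.ext h2)
  have hμsurj : Function.Surjective μ := by
    rintro ⟨f, hfT⟩
    obtain ⟨g, hgV, hgvan, hfeq⟩ := hforward f hfT
    refine ⟨⟨⟨g, hgV⟩, (hkerE ⟨g, hgV⟩).mpr hgvan⟩, ?_⟩
    apply Subtype.ext
    exact hfeq.symm
  have heq : Module.finrank ℂ (LinearMap.ker E) = Module.finrank ℂ
      ↥(V d n ⊓ singSub (fun ji : Fin k × Fin 2 => ![a ji.1, b ji.1, z ji.1 ji.2])) :=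
    LinearEquiv.finrank_eq (LinearEquiv.ofBijective μ ⟨hμinj, hμsurj⟩)
  omega

end
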